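/- arXiv:2301.03151 — 2 statements merged into one kernel-verified Lean document; each statement's English description precedes it below -/
import Mathlib

section
/- Given a 2×2 symmetric real matrix C and a full-rank 3×2 real matrix B, there exists a 3×2 real matrix A such that (AᵀB + BᵀA) : C = |C|², where X : Y denotes the Frobenius inner product trace(XᵀY) and |C| the Frobenius norm. Moreover A can be chosen with |A| ≤ |C| / (2 σ₂(B)), where σ₂(B) > 0 is the smallest singular value of B. -/
open Matrix

/-- Frobenius inner product `X : Y = trace (Xᵀ Y)`. -/
noncomputable def frobInner {m n : Type*} [Fintype m] [Fintype n]
    (X Y : Matrix m n ℝ) : ℝ := (Xᵀ * Y).trace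

/-- Frobenius norm. -/
noncomputable def frobNorm {m n : Type*} [Fintype m] [Fintype n]
    (X : Matrix m n ℝ) : ℝ := Real.sqrt (frobInner X X)

/-- Euclidean norm of a vector. -/
noncomputable def vnorm {n : ℕ} (x : Fin n → ℝ) : ℝ := Real.sqrt (∑ i, x i ^ 2)

/-- Smallest singular value of a 3×2 real matrix. -/
noncomputable def sigma2 (B : Matrix (Fin 3) (Fin 2) ℝ) : ℝ :=
  sInf {r : ℝ | ∃ x : Fin 2 → ℝ, vnorm x = 1 ∧ r = vnorm (B.mulVec x)}

lemma vnorm_nonneg {n : ℕ} (x : Fin n → ℝ) : 0 ≤ vnorm x := Real.sqrt_nonneg _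

lemma vnorm_sq {n : ℕ} (x : Fin n → ℝ) : vnorm x ^ 2 = ∑ i, x i ^ 2 :=
  Real.sq_sqrt (Finset.sum_nonneg fun _ _ => sq_nonneg _)

lemma vnorm_smul {n : ℕ} (c : ℝ) (x : Fin n → ℝ) : vnorm (c • x) = |c| * vnorm x := by
  simp only [vnorm, Pi.smul_apply, smul_eq_mul, mul_pow, ← Finset.mul_sum]
  rw [Real.sqrt_mul (sq_nonneg c), Real.sqrt_sq_eq_abs]

lemma frobInner_self {m n : Type*} [Fintype m] [Fintype n] (X : Matrix m n ℝ) :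
    frobInner X X = ∑ j, ∑ i, X i j ^ 2 := by
  simp [frobInner, Matrix.trace, Matrix.mul_apply, Matrix.diag, sq]

lemma frobNorm_sq {m n : Type*} [Fintype m] [Fintype n] (X : Matrix m n ℝ) :
    frobNorm X ^ 2 = frobInner X X := by
  rw [frobNorm, Real.sq_sqrt]
  rw [frobInner_self]
  exact Finset.sum_nonneg fun _ _ => Finset.sum_nonneg fun _ _ => sq_nonneg _

lemma auxineq (s a b q : ℝ) (hs : 0 < s) (ha : 0 ≤ a) (hb : 0 ≤ b)
    (h1 : s ^ 2 * a ≤ q) (h2 : q ^ 2 ≤ a * b) : s ^ 2 * q ≤ b := by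
  have hq0 : 0 ≤ q := le_trans (by positivity) h1
  rcases eq_or_lt_of_le hq0 with h | h
  · rw [← h, mul_zero]; exact hb
  · nlinarith [mul_le_mul_of_nonneg_right h1 hb]

theorem solvability_matrix_equation
    (C : Matrix (Fin 2) (Fin 2) ℝ) (hC : Cᵀ = C)
    (B : Matrix (Fin 3) (Fin 2) ℝ) (hB : 0 < sigma2 B) :
    ∃ A : Matrix (Fin 3) (Fin 2) ℝ,
      frobInner (Aᵀ * B + Bᵀ * A) C = (frobNorm C) ^ 2 ∧
      frobNorm A ≤ frobNorm C / (2 * sigma2 B) := by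
  set s := sigma2 B with hsd
  have hs : 0 < s := hB
  -- Step 1: the scaling bound for the smallest singular value
  have key2 : ∀ x : Fin 2 → ℝ,
      s ^ 2 * (x ⬝ᵥ x) ≤ (B.mulVec x) ⬝ᵥ (B.mulVec x) := by
    intro x
    have key1 : ∀ y : Fin 2 → ℝ, vnorm y = 1 → s ≤ vnorm (B.mulVec y) := by
      intro y hy
      rw [hsd]
      apply csInf_le
      · exact ⟨0, fun r ⟨z, _, hz⟩ => hz ▸ vnorm_nonneg _⟩
      · exact ⟨y, hy, rfl⟩
    have hdot : ∀ {k : ℕ} (y : Fin k → ℝ), y ⬝ᵥ y = vnorm y ^ 2 := by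
      intro k y; rw [vnorm_sq]; simp [dotProduct, sq]
    by_cases hx : x = 0
    · simp [hx]
    · have hnx : 0 < vnorm x := by
        rcases Function.ne_iff.mp hx with ⟨i, hi⟩
        apply Real.sqrt_pos.mpr
        apply Finset.sum_pos' (fun _ _ => sq_nonneg _)
          ⟨i, Finset.mem_univ i,
            pow_pos (abs_pos.mpr hi) 2 |>.trans_le (le_of_eq (sq_abs _))⟩
      set u : Fin 2 → ℝ := (vnorm x)⁻¹ • x with hu
      have hu1 : vnorm u = 1 := by
        rw [hu, vnorm_smul, abs_of_pos (by positivity)]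
        field_simp
      have h2 := key1 u hu1
      rw [hu, Matrix.mulVec_smul, vnorm_smul, abs_of_pos (by positivity)] at h2
      have h3 : s * vnorm x ≤ vnorm (B.mulVec x) := by
        rw [← le_div_iff₀ hnx] at *
        rwa [div_eq_inv_mul]
      have h4 : (s * vnorm x) ^ 2 ≤ vnorm (B.mulVec x) ^ 2 :=
        pow_le_pow_left₀ (by positivity) h3 2
      rw [hdot, hdot]
      calc s ^ 2 * vnorm x ^ 2 = (s * vnorm x) ^ 2 := by ring
      _ ≤ _ := h4
  -- Step 2: the Gram matrix
  set M : Matrix (Fin 2) (Fin 2) ℝ := Bᵀ * B with hMdef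
  have hMs : Mᵀ = M := by rw [hMdef, Matrix.transpose_mul, Matrix.transpose_transpose]
  have keyM : ∀ x : Fin 2 → ℝ, s ^ 2 * (x ⬝ᵥ x) ≤ x ⬝ᵥ M.mulVec x := by
    intro x
    have : x ⬝ᵥ M.mulVec x = (B.mulVec x) ⬝ᵥ (B.mulVec x) := by
      rw [hMdef, ← Matrix.mulVec_mulVec, Matrix.dotProduct_mulVec,
        Matrix.vecMul_transpose]
    rw [this]
    exact key2 x
  -- Step 3: M is invertible
  have hdet : 0 < M.det := by
    have hsym : M 1 0 = M 0 1 := by rw [← Matrix.transpose_apply M 0 1, hMs]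
    have h1 := keyM ![1, 0]
    have h2 := keyM ![0, 1]
    have h3 := keyM ![M 1 1, -(M 0 1)]
    simp [dotProduct, Matrix.mulVec, Fin.sum_univ_two, hsym] at h1 h2 h3
    rw [Matrix.det_fin_two, hsym]
    have hM11 : 0 < M 1 1 := lt_of_lt_of_le (pow_pos hs 2) h2
    nlinarith [h3, mul_pos (pow_pos hs 2) (mul_pos hM11 hM11),
      mul_nonneg (pow_pos hs 2).le (sq_nonneg (M 0 1))]
  have hUnit : IsUnit M.det := (isUnit_iff_ne_zero).mpr (ne_of_gt hdet)
  set N : Matrix (Fin 2) (Fin 2) ℝ := M⁻¹ with hNdef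
  have hMN : M * N = 1 := Matrix.mul_nonsing_inv M hUnit
  have hNM : N * M = 1 := Matrix.nonsing_inv_mul M hUnit
  have hNt : Nᵀ = N := by rw [hNdef, Matrix.transpose_nonsing_inv, hMs]
  -- Step 4: the inverse bound
  have invb : ∀ v : Fin 2 → ℝ, s ^ 2 * (v ⬝ᵥ N.mulVec v) ≤ v ⬝ᵥ v := by
    intro v
    have hMw : M.mulVec (N.mulVec v) = v := by
      rw [Matrix.mulVec_mulVec, hMN, Matrix.one_mulVec]
    set w := N.mulVec v with hw
    have hq : v ⬝ᵥ w = w ⬝ᵥ M.mulVec w := by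
      conv_lhs => rw [← hMw]
      rw [dotProduct_comm]
    have hcs : (w ⬝ᵥ v) ^ 2 ≤ (w ⬝ᵥ w) * (v ⬝ᵥ v) := by
      simpa [dotProduct, sq] using Finset.sum_mul_sq_le_sq_mul_sq Finset.univ w v
    have ha : 0 ≤ w ⬝ᵥ w := Finset.sum_nonneg fun _ _ => mul_self_nonneg _
    have hb : 0 ≤ v ⬝ᵥ v := Finset.sum_nonneg fun _ _ => mul_self_nonneg _
    have hwv : w ⬝ᵥ v = v ⬝ᵥ w := dotProduct_comm _ _
    exact auxineq s (w ⬝ᵥ w) (v ⬝ᵥ v) (v ⬝ᵥ w) hs ha hb (hq ▸ keyM w)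
      (by rw [← hwv]; exact hcs)
  -- the candidate solution
  refine ⟨((1:ℝ)/2) • (B * N * C), ?_, ?_⟩
  · -- the equation
    have heq : (((1:ℝ)/2) • (B * N * C))ᵀ * B + Bᵀ * (((1:ℝ)/2) • (B * N * C)) = C := by
      rw [Matrix.transpose_smul, Matrix.transpose_mul, Matrix.transpose_mul, hC, hNt,
        Matrix.smul_mul, Matrix.mul_smul]
      have h1 : C * (N * Bᵀ) * B = C := by
        calc C * (N * Bᵀ) * B = C * (N * (Bᵀ * B)) := by simp only [Matrix.mul_assoc]
        _ = C := by rw [← hMdef, hNM, Matrix.mul_one]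
      have h2 : Bᵀ * (B * N * C) = C := by
        calc Bᵀ * (B * N * C) = (Bᵀ * B * N) * C := by simp only [Matrix.mul_assoc]
        _ = C := by rw [← hMdef, hMN, Matrix.one_mul]
      rw [h1, h2, ← add_smul]
      norm_num
    rw [heq, ← frobNorm_sq]
  · -- the norm bound
    have hgram : (((1:ℝ)/2) • (B * N * C))ᵀ * (((1:ℝ)/2) • (B * N * C))
        = ((1:ℝ)/4) • (C * N * C) := by
      rw [Matrix.transpose_smul, Matrix.transpose_mul, Matrix.transpose_mul, hC, hNt,
        Matrix.smul_mul, Matrix.mul_smul, smul_smul]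
      have h : C * (N * Bᵀ) * (B * N * C) = C * N * C := by
        calc C * (N * Bᵀ) * (B * N * C) = C * ((N * (Bᵀ * B)) * (N * C)) := by
              simp only [Matrix.mul_assoc]
        _ = C * N * C := by rw [← hMdef, hNM, Matrix.one_mul, ← Matrix.mul_assoc]
      rw [h]
      norm_num
    -- trace inequality
    have htr : s ^ 2 * (C * N * C).trace ≤ frobInner C C := by
      rw [frobInner_self]
      have hCs : C 1 0 = C 0 1 := by rw [← Matrix.transpose_apply C 0 1, hC]
      have i1 := invb ![C 0 0, C 1 0]
      have i2 := invb ![C 0 1, C 1 1]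
      simp [dotProduct, Matrix.mulVec, Fin.sum_univ_two] at i1 i2
      simp [Matrix.trace, Matrix.mul_apply, Matrix.diag, Fin.sum_univ_two, hCs, sq] at *
      nlinarith [i1, i2]
    have hAA : frobInner (((1:ℝ)/2) • (B * N * C)) (((1:ℝ)/2) • (B * N * C))
        = ((1:ℝ)/4) * (C * N * C).trace := by
      rw [frobInner, hgram, Matrix.trace_smul]
      simp
    have hAnn : 0 ≤ frobInner (((1:ℝ)/2) • (B * N * C)) (((1:ℝ)/2) • (B * N * C)) := by
      rw [frobInner_self]
      exact Finset.sum_nonneg fun _ _ => Finset.sum_nonneg fun _ _ => sq_nonneg _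
    have hCnn : 0 ≤ frobInner C C := by
      rw [frobInner_self]
      exact Finset.sum_nonneg fun _ _ => Finset.sum_nonneg fun _ _ => sq_nonneg _
    rw [frobNorm, frobNorm]
    rw [le_div_iff₀ (by positivity), ← Real.sqrt_sq (by positivity : (0:ℝ) ≤ 2 * s),
      ← Real.sqrt_mul hAnn]
    apply Real.sqrt_le_sqrt
    rw [hAA]
    nlinarith [htr]
end

section
/- Let B be a full-rank 3×2 real matrix and C a nonzero 2×2 symmetric real matrix. Then the matrix A = (BC)|C|²/(2|BC|²) satisfies (AᵀB + BᵀA) : C = |C|² and |A| = |C|²/(2|BC|) ≤ |C|/(2σ₂(B)). -/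
open Matrix

lemma frobInner_eq_sum {m n : Type*} [Fintype m] [Fintype n] (X Y : Matrix m n ℝ) :
    frobInner X Y = ∑ j, ∑ i, X i j * Y i j := by
  simp [frobInner, Matrix.trace, Matrix.mul_apply, Matrix.diag, Matrix.transpose_apply]

lemma frobInner_self_nonneg {m n : Type*} [Fintype m] [Fintype n] (X : Matrix m n ℝ) :
    0 ≤ frobInner X X := by
  rw [frobInner_eq_sum]
  exact Finset.sum_nonneg fun j _ => Finset.sum_nonneg fun i _ => mul_self_nonneg _

lemma frobNorm_nonneg {m n : Type*} [Fintype m] [Fintype n] (X : Matrix m n ℝ) :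
    0 ≤ frobNorm X := Real.sqrt_nonneg _

lemma frobNorm_eq_zero_iff {m n : Type*} [Fintype m] [Fintype n] (X : Matrix m n ℝ) :
    frobNorm X = 0 ↔ X = 0 := by
  rw [frobNorm, Real.sqrt_eq_zero (frobInner_self_nonneg X), frobInner_eq_sum]
  constructor
  · intro h
    ext i j
    have h1 := (Finset.sum_eq_zero_iff_of_nonneg
      (fun j _ => Finset.sum_nonneg fun i _ => mul_self_nonneg (X i j))).1 h j (by simp)
    have h2 := (Finset.sum_eq_zero_iff_of_nonneg
      (fun i _ => mul_self_nonneg (X i j))).1 h1 i (by simp)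
    simpa [mul_self_eq_zero] using h2
  · intro h; simp [h]

lemma frobNorm_smul {m n : Type*} [Fintype m] [Fintype n] (c : ℝ) (X : Matrix m n ℝ) :
    frobNorm (c • X) = |c| * frobNorm X := by
  have : frobInner (c • X) (c • X) = c ^ 2 * frobInner X X := by
    simp [frobInner_eq_sum, Finset.mul_sum]; ring_nf
  rw [frobNorm, this, Real.sqrt_mul (sq_nonneg c), Real.sqrt_sq_eq_abs, frobNorm]

lemma vnorm_eq_zero_iff {n : ℕ} (x : Fin n → ℝ) : vnorm x = 0 ↔ x = 0 := by
  rw [vnorm, Real.sqrt_eq_zero (Finset.sum_nonneg fun i _ => sq_nonneg _)]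
  constructor
  · intro h
    funext i
    have := (Finset.sum_eq_zero_iff_of_nonneg (fun i _ => sq_nonneg (x i))).1 h i (by simp)
    simpa [pow_eq_zero_iff] using this
  · intro h; simp [h]

lemma sigma2_mul_vnorm_le (B : Matrix (Fin 3) (Fin 2) ℝ) (x : Fin 2 → ℝ) :
    sigma2 B * vnorm x ≤ vnorm (B.mulVec x) := by
  by_cases hx : x = 0
  · simp [hx, (vnorm_eq_zero_iff (0 : Fin 2 → ℝ)).2 rfl, vnorm_nonneg]
  · have hv : 0 < vnorm x := by
      rcases (vnorm_nonneg x).lt_or_eq with h | h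
      · exact h
      · exact absurd ((vnorm_eq_zero_iff x).1 h.symm) hx
    set c := (vnorm x)⁻¹ with hc
    have hcpos : 0 < c := inv_pos.2 hv
    have h1 : vnorm (c • x) = 1 := by
      rw [vnorm_smul, abs_of_pos hcpos, hc, inv_mul_cancel₀ hv.ne']
    have hbdd : BddBelow {r : ℝ | ∃ x : Fin 2 → ℝ, vnorm x = 1 ∧ r = vnorm (B.mulVec x)} := by
      refine ⟨0, fun r hr => ?_⟩
      obtain ⟨y, _, rfl⟩ := hr
      exact vnorm_nonneg _
    have hmem : vnorm (B.mulVec (c • x)) ∈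
        {r : ℝ | ∃ x : Fin 2 → ℝ, vnorm x = 1 ∧ r = vnorm (B.mulVec x)} :=
      ⟨c • x, h1, rfl⟩
    have hle := csInf_le hbdd hmem
    rw [Matrix.mulVec_smul, vnorm_smul, abs_of_pos hcpos] at hle
    have h2 := mul_le_mul_of_nonneg_right hle hv.le
    have h3 : c * vnorm (B.mulVec x) * vnorm x = vnorm (B.mulVec x) := by
      rw [hc]; field_simp
    calc sigma2 B * vnorm x ≤ c * vnorm (B.mulVec x) * vnorm x := h2
      _ = vnorm (B.mulVec x) := h3

lemma sigma2_mul_frobNorm_le (B : Matrix (Fin 3) (Fin 2) ℝ) (hB : 0 < sigma2 B)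
    (C : Matrix (Fin 2) (Fin 2) ℝ) :
    sigma2 B * frobNorm C ≤ frobNorm (B * C) := by
  have hsq : (sigma2 B * frobNorm C) ^ 2 ≤ frobNorm (B * C) ^ 2 := by
    have hC2 : frobNorm C ^ 2 = ∑ j, vnorm (fun i => C i j) ^ 2 := by
      rw [frobNorm_sq, frobInner_eq_sum]
      exact Finset.sum_congr rfl fun j _ => by
        rw [vnorm_sq]; exact Finset.sum_congr rfl fun i _ => (sq (C i j)).symm
    have hBC2 : frobNorm (B * C) ^ 2 = ∑ j, vnorm (B.mulVec (fun i => C i j)) ^ 2 := by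
      rw [frobNorm_sq, frobInner_eq_sum]
      refine Finset.sum_congr rfl fun j _ => ?_
      rw [vnorm_sq]
      refine Finset.sum_congr rfl fun i _ => ?_
      rw [Matrix.mul_apply, Matrix.mulVec, dotProduct, sq]
    rw [hBC2, mul_pow, hC2, Finset.mul_sum]
    refine Finset.sum_le_sum fun j _ => ?_
    have h := sigma2_mul_vnorm_le B (fun i => C i j)
    have hnn : 0 ≤ sigma2 B * vnorm (fun i => C i j) :=
      mul_nonneg hB.le (vnorm_nonneg _)
    calc sigma2 B ^ 2 * vnorm (fun i => C i j) ^ 2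
        = (sigma2 B * vnorm (fun i => C i j)) ^ 2 := by ring
      _ ≤ vnorm (B.mulVec (fun i => C i j)) ^ 2 := by
          exact pow_le_pow_left₀ hnn h 2
  have h1 : 0 ≤ sigma2 B * frobNorm C := mul_nonneg hB.le (frobNorm_nonneg C)
  nlinarith [frobNorm_nonneg (B * C)]

lemma frobInner_smul_left {m n : Type*} [Fintype m] [Fintype n] (c : ℝ)
    (X Y : Matrix m n ℝ) : frobInner (c • X) Y = c * frobInner X Y := by
  simp [frobInner_eq_sum, Finset.mul_sum, mul_assoc]

theorem explicit_solution_matrix_equation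
    (B : Matrix (Fin 3) (Fin 2) ℝ) (hB : 0 < sigma2 B)
    (C : Matrix (Fin 2) (Fin 2) ℝ) (hC : Cᵀ = C) (hC0 : C ≠ 0)
    (A : Matrix (Fin 3) (Fin 2) ℝ)
    (hA : A = ((frobNorm C) ^ 2 / (2 * (frobNorm (B * C)) ^ 2)) • (B * C)) :
    frobInner (Aᵀ * B + Bᵀ * A) C = (frobNorm C) ^ 2 ∧
    frobNorm A = (frobNorm C) ^ 2 / (2 * frobNorm (B * C)) ∧
    frobNorm A ≤ frobNorm C / (2 * sigma2 B) := by
  have hCpos : 0 < frobNorm C := by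
    rcases (frobNorm_nonneg C).lt_or_eq with h | h
    · exact h
    · exact absurd ((frobNorm_eq_zero_iff C).1 h.symm) hC0
  have hkey := sigma2_mul_frobNorm_le B hB C
  have hBCpos : 0 < frobNorm (B * C) :=
    lt_of_lt_of_le (mul_pos hB hCpos) hkey
  set c := (frobNorm C) ^ 2 / (2 * (frobNorm (B * C)) ^ 2) with hcdef
  have hcpos : 0 < c := by positivity
  -- Part 1
  have htr2 : (Bᵀ * (B * C) * C).trace = frobInner (B * C) (B * C) := by
    calc (Bᵀ * (B * C) * C).trace = (C * (Bᵀ * (B * C))).trace :=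
          (Matrix.trace_mul_comm _ _)
      _ = ((B * C)ᵀ * (B * C)).trace := by
          rw [Matrix.transpose_mul, hC, Matrix.mul_assoc]
      _ = frobInner (B * C) (B * C) := by rw [frobInner]
  have part1 : frobInner (Aᵀ * B + Bᵀ * A) C = (frobNorm C) ^ 2 := by
    have expand : frobInner (Aᵀ * B + Bᵀ * A) C
        = ((Bᵀ * A) * C).trace + ((Aᵀ * B) * C).trace := by
      rw [frobInner, Matrix.transpose_add, Matrix.transpose_mul, Matrix.transpose_mul,
        Matrix.transpose_transpose, Matrix.transpose_transpose, Matrix.add_mul,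
        Matrix.trace_add]
    rw [expand, hA]
    simp only [Matrix.mul_smul, Matrix.smul_mul, Matrix.transpose_smul, Matrix.trace_smul]
    have h2 : ((B * C)ᵀ * B * C).trace = frobInner (B * C) (B * C) := by
      rw [Matrix.mul_assoc, frobInner]
    rw [h2, htr2]
    have hfi : frobInner (B * C) (B * C) = (frobNorm (B * C)) ^ 2 :=
      (frobNorm_sq (B * C)).symm
    rw [hfi]
    simp only [smul_eq_mul, hcdef]
    field_simp
    ring
  -- Part 2
  have part2 : frobNorm A = (frobNorm C) ^ 2 / (2 * frobNorm (B * C)) := by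
    rw [hA, frobNorm_smul, abs_of_pos hcpos, hcdef]
    field_simp
  refine ⟨part1, part2, ?_⟩
  rw [part2]
  rw [div_le_div_iff₀ (by positivity) (by positivity)]
  nlinarith [hCpos.le, hkey]
end
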